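/- Combining the previous exchangeability with the p-value validity: if Y ⊥ X | Z and X^(1),...,X^(B) are i.i.d. draws from the law of X given Z (conditionally independent of (X,Y) given Z), then for any measurable test statistic T, the CRT p-value p = (1 + #{b : T(X^(b),Y,Z) ≥ T(X,Y,Z)})/(B+1) satisfies P(p ≤ α) ≤ α for all α ∈ [0,1]. -/

import Mathlib

open Finset

open Classical in
/-- Probability of an event `S` under the weight function `p` on a finite sample space. -/
noncomputable def Pr {Ω : Type*} [Fintype Ω] (p : Ω → ℝ) (S : Ω → Prop) : ℝ :=
  ∑ ω, if S ω then p ω else 0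

section Helpers

variable {Ω : Type*} [Fintype Ω]

lemma Pr_eq_sum (p : Ω → ℝ) (S : Ω → Prop) [DecidablePred S] :
    Pr p S = ∑ ω, (if S ω then p ω else 0) := by
  unfold Pr
  exact Finset.sum_congr rfl fun ω _ =>
    @if_congr _ _ _ (Classical.propDecidable _) _ _ _ _ _ Iff.rfl rfl rfl

lemma Pr_nonneg (p : Ω → ℝ) (hp : ∀ ω, 0 ≤ p ω) (S : Ω → Prop) : 0 ≤ Pr p S := by
  classical
  unfold Pr
  apply Finset.sum_nonneg
  intro ω _
  split <;> simp [hp ω]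

lemma Pr_mono (p : Ω → ℝ) (hp : ∀ ω, 0 ≤ p ω) {S S' : Ω → Prop}
    (h : ∀ ω, S ω → S' ω) : Pr p S ≤ Pr p S' := by
  classical
  unfold Pr
  apply Finset.sum_le_sum
  intro ω _
  by_cases hS : S ω
  · simp [hS, h ω hS]
  · simp only [hS, if_false]
    split <;> simp [hp ω]

lemma Pr_congr (p : Ω → ℝ) {S S' : Ω → Prop} (h : ∀ ω, S ω ↔ S' ω) :
    Pr p S = Pr p S' := by
  classical
  unfold Pr
  apply Finset.sum_congr rfl
  intro ω _
  exact if_congr (h ω) rfl rfl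

/-- Counting lemma: at most `t` of the `n` positions can have "rank" at most `t`. -/
lemma count_rank {n : ℕ} (f : Fin n → ℝ) (t : ℝ) (ht : 0 ≤ t) :
    (((Finset.univ : Finset (Fin n)).filter (fun i =>
        (1 : ℝ) + (((Finset.univ.filter (fun j => j ≠ i ∧ f i ≤ f j))).card : ℝ) ≤ t)).card : ℝ)
      ≤ t := by
  classical
  set A := (Finset.univ : Finset (Fin n)).filter (fun i =>
        (1 : ℝ) + (((Finset.univ.filter (fun j => j ≠ i ∧ f i ≤ f j))).card : ℝ) ≤ t) with hA
  rcases A.eq_empty_or_nonempty with h | h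
  · simp [h, ht]
  · obtain ⟨i₀, hi₀, hmin⟩ := A.exists_min_image f h
    have hi₀' := (Finset.mem_filter.mp hi₀).2
    have hsub : A.erase i₀ ⊆ Finset.univ.filter (fun j => j ≠ i₀ ∧ f i₀ ≤ f j) := by
      intro j hj
      rcases Finset.mem_erase.mp hj with ⟨hne, hjA⟩
      exact Finset.mem_filter.mpr ⟨Finset.mem_univ _, hne, hmin j hjA⟩
    have hcard : A.card ≤ 1 + (Finset.univ.filter (fun j => j ≠ i₀ ∧ f i₀ ≤ f j)).card := by
      have h1 := Finset.card_le_card hsub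
      have h2 := Finset.card_erase_of_mem hi₀
      have h3 : 0 < A.card := Finset.card_pos.mpr h
      omega
    calc (A.card : ℝ) ≤ 1 + ((Finset.univ.filter (fun j => j ≠ i₀ ∧ f i₀ ≤ f j)).card : ℝ) := by
          exact_mod_cast hcard
      _ ≤ t := hi₀'

/-- The exchangeability core: for i.i.d. draws `w : Fin (B+1) → 𝒳` with common law `q`,
the probability that the rank-statistic of coordinate 0 is at most `t` is at most `t/(B+1)`. -/
lemma core_w {𝒳 : Type*} [Fintype 𝒳] (q : 𝒳 → ℝ) (hq0 : ∀ x, 0 ≤ q x)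
    (hq1 : ∑ x, q x = 1) (B : ℕ) (s : 𝒳 → ℝ) (t : ℝ) (ht : 0 ≤ t) :
    ∑ w : Fin (B+1) → 𝒳,
      (if (1 : ℝ) + ((Finset.univ.filter
          (fun j => j ≠ (0 : Fin (B+1)) ∧ s (w 0) ≤ s (w j))).card : ℝ) ≤ t
        then ∏ j, q (w j) else 0) ≤ t / (B+1) := by
  classical
  set n := B + 1 with hn
  set R : (Fin n → 𝒳) → Fin n → ℝ := fun w i =>
    (1 : ℝ) + ((Finset.univ.filter (fun j => j ≠ i ∧ s (w i) ≤ s (w j))).card : ℝ) with hR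
  set S : Fin n → ℝ := fun i => ∑ w : Fin n → 𝒳, (if R w i ≤ t then ∏ j, q (w j) else 0)
    with hS
  -- all the S i are equal, by exchangeability (swap coordinate 0 and i)
  have hSi : ∀ i : Fin n, S 0 = S i := by
    intro i
    set σ : Equiv.Perm (Fin n) := Equiv.swap 0 i with hσ
    have hσ0 : σ 0 = i := Equiv.swap_apply_left 0 i
    have hcomp : ∀ w : Fin n → 𝒳,
        (if R (w ∘ σ) 0 ≤ t then ∏ j, q ((w ∘ σ) j) else 0)
          = (if R w i ≤ t then ∏ j, q (w j) else 0) := by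
      intro w
      have hprod : ∏ j, q ((w ∘ σ) j) = ∏ j, q (w j) := Equiv.prod_comp σ (fun j => q (w j))
      have hrank : R (w ∘ σ) 0 = R w i := by
        simp only [hR, Function.comp, hσ0]
        congr 2
        rw [Finset.card_filter, Finset.card_filter,
          ← Equiv.sum_comp σ (fun j => if j ≠ i ∧ s (w i) ≤ s (w j) then 1 else 0)]
        apply Finset.sum_congr rfl
        intro j _
        congr 1
        apply propext
        constructor
        · rintro ⟨hj, hle⟩
          exact ⟨fun h => hj (σ.injective (h.trans hσ0.symm)), hle⟩
        · rintro ⟨hj, hle⟩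
          exact ⟨fun h => hj (by rw [h, hσ0]), hle⟩
      rw [hprod, hrank]
    have hre := Equiv.sum_comp (Equiv.arrowCongr σ.symm (Equiv.refl 𝒳))
      (fun w : Fin n → 𝒳 => if R w i ≤ t then ∏ j, q (w j) else 0)
    rw [hS]
    simp only
    rw [← hre]
    apply Finset.sum_congr rfl
    intro w _
    have harr : (Equiv.arrowCongr σ.symm (Equiv.refl 𝒳)) w = w ∘ σ := by
      funext j
      simp [Equiv.arrowCongr]
    rw [harr]
    have h5 : (w ∘ σ) ∘ σ = w := by
      funext j
      simp only [Function.comp_apply]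
      exact congrArg w (Equiv.swap_apply_self 0 i j)
    calc (if R w 0 ≤ t then ∏ j, q (w j) else 0)
        = (if R ((w ∘ σ) ∘ σ) 0 ≤ t then ∏ j, q (((w ∘ σ) ∘ σ) j) else 0) := by rw [h5]
      _ = (if R (w ∘ σ) i ≤ t then ∏ j, q ((w ∘ σ) j) else 0) := hcomp (w ∘ σ)
  -- total mass of all configurations is 1
  have htot : ∑ w : Fin n → 𝒳, ∏ j, q (w j) = 1 := by
    rw [← Fintype.prod_sum (fun (_ : Fin n) (x : 𝒳) => q x)]
    simp [hq1]
  -- sum over i of S i is at most t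
  have hsum : ∑ _i : Fin n, S 0 ≤ t := by
    calc ∑ _i : Fin n, S 0 = ∑ i : Fin n, S i :=
          Finset.sum_congr rfl fun i _ => hSi i
      _ = ∑ w : Fin n → 𝒳, ∑ i : Fin n, (if R w i ≤ t then ∏ j, q (w j) else 0) :=
          Finset.sum_comm
      _ = ∑ w : Fin n → 𝒳,
            ((Finset.univ.filter (fun i => R w i ≤ t)).card : ℝ) * ∏ j, q (w j) := by
          apply Finset.sum_congr rfl
          intro w _
          have : ∀ i : Fin n, (if R w i ≤ t then ∏ j, q (w j) else 0)
              = (if R w i ≤ t then (1:ℝ) else 0) * ∏ j, q (w j) := by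
            intro i; split <;> simp
          rw [Finset.sum_congr rfl fun i _ => this i, ← Finset.sum_mul, Finset.sum_boole]
      _ ≤ ∑ w : Fin n → 𝒳, t * ∏ j, q (w j) := by
          apply Finset.sum_le_sum
          intro w _
          exact mul_le_mul_of_nonneg_right (count_rank (fun i => s (w i)) t ht)
            (Finset.prod_nonneg fun j _ => hq0 _)
      _ = t := by rw [← Finset.mul_sum, htot, mul_one]
  have hfin : (n : ℝ) * S 0 ≤ t := by
    simpa [Finset.sum_const, nsmul_eq_mul] using hsum
  have hn0 : (0 : ℝ) < (n : ℝ) := by positivity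
  have : S 0 ≤ t / (n : ℝ) := by
    rw [le_div_iff₀ hn0, mul_comm]
    exact hfin
  calc S 0 ≤ t / (n : ℝ) := this
    _ = t / (B + 1) := by rw [hn]; push_cast; ring_nf

/-- Version of the core lemma for a pair `(x, v)`. -/
lemma core_pair {𝒳 : Type*} [Fintype 𝒳] (q : 𝒳 → ℝ) (hq0 : ∀ x, 0 ≤ q x)
    (hq1 : ∑ x, q x = 1) (B : ℕ) (s : 𝒳 → ℝ) (t : ℝ) (ht : 0 ≤ t) :
    ∑ x : 𝒳, ∑ v : Fin B → 𝒳,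
      (if (1 : ℝ) + ((Finset.univ.filter (fun b : Fin B => s x ≤ s (v b))).card : ℝ) ≤ t
        then q x * ∏ b, q (v b) else 0) ≤ t / (B+1) := by
  classical
  have key : ∀ (x : 𝒳) (v : Fin B → 𝒳),
      (if (1 : ℝ) + ((Finset.univ.filter (fun b : Fin B => s x ≤ s (v b))).card : ℝ) ≤ t
        then q x * ∏ b, q (v b) else 0)
      = (if (1 : ℝ) + ((Finset.univ.filter
          (fun j => j ≠ (0 : Fin (B+1)) ∧ s ((Fin.cons x v : Fin (B+1) → 𝒳) 0) ≤ s ((Fin.cons x v : Fin (B+1) → 𝒳) j))).card : ℝ) ≤ t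
        then ∏ j, q ((Fin.cons x v : Fin (B+1) → 𝒳) j) else 0) := by
    intro x v
    have hcard : (Finset.univ.filter
          (fun j => j ≠ (0 : Fin (B+1)) ∧ s ((Fin.cons x v : Fin (B+1) → 𝒳) 0) ≤ s ((Fin.cons x v : Fin (B+1) → 𝒳) j))).card
        = (Finset.univ.filter (fun b : Fin B => s x ≤ s (v b))).card := by
      rw [Finset.card_filter, Finset.card_filter, Fin.sum_univ_succ]
      simp [Fin.succ_ne_zero]
    have hprod : ∏ j, q ((Fin.cons x v : Fin (B+1) → 𝒳) j) = q x * ∏ b, q (v b) := by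
      rw [Fin.prod_univ_succ]
      simp
    rw [hcard, hprod]
  calc ∑ x : 𝒳, ∑ v : Fin B → 𝒳,
        (if (1 : ℝ) + ((Finset.univ.filter (fun b : Fin B => s x ≤ s (v b))).card : ℝ) ≤ t
          then q x * ∏ b, q (v b) else 0)
      = ∑ pxv : 𝒳 × (Fin B → 𝒳),
          (if (1 : ℝ) + ((Finset.univ.filter
              (fun j => j ≠ (0 : Fin (B+1)) ∧
                s ((Fin.cons pxv.1 pxv.2 : Fin (B+1) → 𝒳) 0) ≤ s ((Fin.cons pxv.1 pxv.2 : Fin (B+1) → 𝒳) j))).card : ℝ) ≤ t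
            then ∏ j, q ((Fin.cons pxv.1 pxv.2 : Fin (B+1) → 𝒳) j) else 0) := by
        rw [Fintype.sum_prod_type]
        exact Finset.sum_congr rfl fun x _ => Finset.sum_congr rfl fun v _ => key x v
    _ = ∑ w : Fin (B+1) → 𝒳,
          (if (1 : ℝ) + ((Finset.univ.filter
              (fun j => j ≠ (0 : Fin (B+1)) ∧ s (w 0) ≤ s (w j))).card : ℝ) ≤ t
            then ∏ j, q (w j) else 0) :=
        Fintype.sum_equiv (Fin.consEquiv (fun _ => 𝒳)) _ _ (fun pxv => rfl)
    _ ≤ t / (B+1) := core_w q hq0 hq1 B s t ht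

end Helpers

theorem stmt6 {Ω 𝒳 𝒴 𝒵 : Type*} [Fintype Ω] [Fintype 𝒳] [Fintype 𝒴] [Fintype 𝒵]
    (p : Ω → ℝ) (hp : ∀ ω, 0 ≤ p ω) (hp1 : ∑ ω, p ω = 1)
    (X : Ω → 𝒳) (Y : Ω → 𝒴) (Z : Ω → 𝒵) (B : ℕ) (Xs : Fin B → Ω → 𝒳)
    -- null hypothesis: Y ⊥ X | Z
    (hCI : ∀ (y : 𝒴) (x : 𝒳) (z : 𝒵), 0 < Pr p (fun ω => Z ω = z) →
      Pr p (fun ω => Y ω = y ∧ X ω = x ∧ Z ω = z) / Pr p (fun ω => Z ω = z)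
        = (Pr p (fun ω => Y ω = y ∧ Z ω = z) / Pr p (fun ω => Z ω = z))
          * (Pr p (fun ω => X ω = x ∧ Z ω = z) / Pr p (fun ω => Z ω = z)))
    -- X^(1),...,X^(B) are i.i.d. from the conditional law of X given Z,
    -- conditionally independent of (X, Y) given Z
    (hresample : ∀ (z : 𝒵), 0 < Pr p (fun ω => Z ω = z) →
      ∀ (x : 𝒳) (y : 𝒴) (v : Fin B → 𝒳),
        Pr p (fun ω => X ω = x ∧ Y ω = y ∧ (∀ b, Xs b ω = v b) ∧ Z ω = z)
            / Pr p (fun ω => Z ω = z)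
          = (Pr p (fun ω => X ω = x ∧ Y ω = y ∧ Z ω = z) / Pr p (fun ω => Z ω = z))
            * ∏ b, (Pr p (fun ω => X ω = v b ∧ Z ω = z) / Pr p (fun ω => Z ω = z)))
    -- an arbitrary test statistic and the CRT p-value
    (T : 𝒳 → 𝒴 → 𝒵 → ℝ) (pval : Ω → ℝ)
    (hpval : ∀ ω, pval ω =
      (1 + ((Finset.univ.filter
        (fun b : Fin B => T (X ω) (Y ω) (Z ω) ≤ T (Xs b ω) (Y ω) (Z ω))).card : ℝ))
        / (B + 1)) :
    ∀ α ∈ Set.Icc (0 : ℝ) 1, Pr p (fun ω => pval ω ≤ α) ≤ α := by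
  classical
  intro α hα
  obtain ⟨hα0, hα1⟩ := hα
  set g : 𝒳 → (Fin B → 𝒳) → 𝒴 → 𝒵 → ℝ := fun x v y z =>
    (1 + ((Finset.univ.filter (fun b : Fin B => T x y z ≤ T (v b) y z)).card : ℝ)) / (B + 1)
    with hg
  set E : 𝒳 → 𝒴 → 𝒵 → (Fin B → 𝒳) → Ω → Prop := fun x y z v ω =>
    X ω = x ∧ Y ω = y ∧ (∀ b, Xs b ω = v b) ∧ Z ω = z with hE
  have hpval' : ∀ (x : 𝒳) (y : 𝒴) (z : 𝒵) (v : Fin B → 𝒳) (ω : Ω),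
      E x y z v ω → pval ω = g x v y z := by
    rintro x y z v ω ⟨hx, hy, hv, hz⟩
    rw [hpval ω, hg]
    simp only [hx, hy, hz]
    have hfil : (Finset.univ.filter (fun b : Fin B => T x y z ≤ T (Xs b ω) y z))
        = (Finset.univ.filter (fun b : Fin B => T x y z ≤ T (v b) y z)) :=
      Finset.filter_congr (fun b _ => by rw [hv b])
    rw [hfil]
  -- Step 1: decompose the probability over elementary events
  have step1 : Pr p (fun ω => pval ω ≤ α)
      = ∑ y : 𝒴, ∑ z : 𝒵, ∑ x : 𝒳, ∑ v : Fin B → 𝒳,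
          (if g x v y z ≤ α then Pr p (E x y z v) else 0) := by
    have inner : ∀ (x : 𝒳) (y : 𝒴) (z : 𝒵) (v : Fin B → 𝒳),
        (if g x v y z ≤ α then Pr p (E x y z v) else 0)
          = ∑ ω, (if E x y z v ω then (if pval ω ≤ α then p ω else 0) else 0) := by
      intro x y z v
      by_cases hc : g x v y z ≤ α
      · rw [if_pos hc]
        unfold Pr
        apply Finset.sum_congr rfl
        intro ω _
        by_cases hEω : E x y z v ω
        · rw [if_pos hEω, if_pos hEω, if_pos (by rw [hpval' x y z v ω hEω]; exact hc)]
        · rw [if_neg hEω, if_neg hEω]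
      · rw [if_neg hc]
        symm
        apply Finset.sum_eq_zero
        intro ω _
        by_cases hEω : E x y z v ω
        · rw [if_pos hEω, if_neg (by rw [hpval' x y z v ω hEω]; exact hc)]
        · rw [if_neg hEω]
    have collapse : ∀ ω : Ω,
        (∑ y : 𝒴, ∑ z : 𝒵, ∑ x : 𝒳, ∑ v : Fin B → 𝒳,
          (if E x y z v ω then (if pval ω ≤ α then p ω else 0) else 0))
        = (if pval ω ≤ α then p ω else 0) := by
      intro ω
      rw [Finset.sum_eq_single (Y ω)]
      · rw [Finset.sum_eq_single (Z ω)]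
        · rw [Finset.sum_eq_single (X ω)]
          · rw [Finset.sum_eq_single (fun b => Xs b ω)]
            · exact if_pos ⟨rfl, rfl, fun b => rfl, rfl⟩
            · intro v _ hv
              exact if_neg (fun h => hv (funext h.2.2.1).symm)
            · intro hmem; exact absurd (Finset.mem_univ _) hmem
          · intro x _ hx
            apply Finset.sum_eq_zero
            intro v _
            exact if_neg (fun h => hx h.1.symm)
          · intro hmem; exact absurd (Finset.mem_univ _) hmem
        · intro z _ hz
          apply Finset.sum_eq_zero; intro x _
          apply Finset.sum_eq_zero; intro v _
          exact if_neg (fun h => hz h.2.2.2.symm)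
        · intro hmem; exact absurd (Finset.mem_univ _) hmem
      · intro y _ hy
        apply Finset.sum_eq_zero; intro z _
        apply Finset.sum_eq_zero; intro x _
        apply Finset.sum_eq_zero; intro v _
        exact if_neg (fun h => hy h.2.1.symm)
      · intro hmem; exact absurd (Finset.mem_univ _) hmem
    calc Pr p (fun ω => pval ω ≤ α)
        = ∑ ω, (if pval ω ≤ α then p ω else 0) := Pr_eq_sum p _
      _ = ∑ ω, ∑ y : 𝒴, ∑ z : 𝒵, ∑ x : 𝒳, ∑ v : Fin B → 𝒳,
            (if E x y z v ω then (if pval ω ≤ α then p ω else 0) else 0) :=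
          (Finset.sum_congr rfl fun ω _ => (collapse ω).symm)
      _ = ∑ y : 𝒴, ∑ ω, ∑ z : 𝒵, ∑ x : 𝒳, ∑ v : Fin B → 𝒳,
            (if E x y z v ω then (if pval ω ≤ α then p ω else 0) else 0) := Finset.sum_comm
      _ = ∑ y : 𝒴, ∑ z : 𝒵, ∑ ω, ∑ x : 𝒳, ∑ v : Fin B → 𝒳,
            (if E x y z v ω then (if pval ω ≤ α then p ω else 0) else 0) :=
          Finset.sum_congr rfl fun y _ => Finset.sum_comm
      _ = ∑ y : 𝒴, ∑ z : 𝒵, ∑ x : 𝒳, ∑ ω, ∑ v : Fin B → 𝒳,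
            (if E x y z v ω then (if pval ω ≤ α then p ω else 0) else 0) :=
          Finset.sum_congr rfl fun y _ => Finset.sum_congr rfl fun z _ => Finset.sum_comm
      _ = ∑ y : 𝒴, ∑ z : 𝒵, ∑ x : 𝒳, ∑ v : Fin B → 𝒳, ∑ ω,
            (if E x y z v ω then (if pval ω ≤ α then p ω else 0) else 0) :=
          Finset.sum_congr rfl fun y _ => Finset.sum_congr rfl fun z _ =>
            Finset.sum_congr rfl fun x _ => Finset.sum_comm
      _ = ∑ y : 𝒴, ∑ z : 𝒵, ∑ x : 𝒳, ∑ v : Fin B → 𝒳,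
            (if g x v y z ≤ α then Pr p (E x y z v) else 0) :=
          Finset.sum_congr rfl fun y _ => Finset.sum_congr rfl fun z _ =>
            Finset.sum_congr rfl fun x _ => Finset.sum_congr rfl fun v _ =>
              (inner x y z v).symm
  -- Step 2: bound each (y, z) block
  have step2 : ∀ (y : 𝒴) (z : 𝒵),
      (∑ x : 𝒳, ∑ v : Fin B → 𝒳, (if g x v y z ≤ α then Pr p (E x y z v) else 0))
        ≤ Pr p (fun ω => Y ω = y ∧ Z ω = z) * α := by
    intro y z
    by_cases hz : 0 < Pr p (fun ω => Z ω = z)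
    · -- positive conditional probability case
      set c := Pr p (fun ω => Z ω = z) with hc
      have hcne : c ≠ 0 := ne_of_gt hz
      set q : 𝒳 → ℝ := fun x => Pr p (fun ω => X ω = x ∧ Z ω = z) / c with hq
      have hq0 : ∀ x, 0 ≤ q x := fun x =>
        div_nonneg (Pr_nonneg p hp _) (le_of_lt hz)
      have hq1 : ∑ x, q x = 1 := by
        have hsum : ∑ x : 𝒳, Pr p (fun ω => X ω = x ∧ Z ω = z) = c := by
          rw [hc]
          unfold Pr
          rw [Finset.sum_comm]
          apply Finset.sum_congr rfl
          intro ω _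
          by_cases hzω : Z ω = z
          · rw [if_pos hzω]
            rw [Finset.sum_eq_single (X ω)]
            · exact if_pos ⟨rfl, hzω⟩
            · intro x _ hx; exact if_neg (fun h => hx h.1.symm)
            · intro hmem; exact absurd (Finset.mem_univ _) hmem
          · rw [if_neg hzω]
            apply Finset.sum_eq_zero
            intro x _
            exact if_neg (fun h => hzω h.2)
        rw [hq]
        rw [← Finset.sum_div, hsum, div_self hcne]
      have hjoint : ∀ (x : 𝒳) (v : Fin B → 𝒳),
          Pr p (E x y z v) = Pr p (fun ω => Y ω = y ∧ Z ω = z) * (q x * ∏ b, q (v b)) := by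
        intro x v
        have h1 := hresample z hz x y v
        have h3 : Pr p (fun ω => X ω = x ∧ Y ω = y ∧ Z ω = z)
            = Pr p (fun ω => Y ω = y ∧ X ω = x ∧ Z ω = z) :=
          Pr_congr p (fun ω => by tauto)
        have h2 := hCI y x z hz
        rw [h3, h2] at h1
        have h4 : Pr p (E x y z v)
            = ((Pr p (fun ω => Y ω = y ∧ Z ω = z) / c
                * (Pr p (fun ω => X ω = x ∧ Z ω = z) / c))
              * ∏ b, (Pr p (fun ω => X ω = v b ∧ Z ω = z) / c)) * c := by
          rw [← h1, div_mul_cancel₀ _ hcne]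
        rw [h4, hq]
        field_simp
      have hcond : ∀ (x : 𝒳) (v : Fin B → 𝒳),
          (g x v y z ≤ α) ↔
          ((1 : ℝ) + ((Finset.univ.filter
            (fun b : Fin B => T x y z ≤ T (v b) y z)).card : ℝ) ≤ α * (B + 1)) := by
        intro x v
        rw [hg]
        exact div_le_iff₀ (by positivity)
      calc (∑ x : 𝒳, ∑ v : Fin B → 𝒳, (if g x v y z ≤ α then Pr p (E x y z v) else 0))
          = Pr p (fun ω => Y ω = y ∧ Z ω = z) *
            (∑ x : 𝒳, ∑ v : Fin B → 𝒳,
              (if (1 : ℝ) + ((Finset.univ.filter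
                  (fun b : Fin B => T x y z ≤ T (v b) y z)).card : ℝ) ≤ α * (B + 1)
                then q x * ∏ b, q (v b) else 0)) := by
            rw [Finset.mul_sum]
            apply Finset.sum_congr rfl
            intro x _
            rw [Finset.mul_sum]
            apply Finset.sum_congr rfl
            intro v _
            rw [hjoint x v]
            by_cases hcnd : g x v y z ≤ α
            · rw [if_pos hcnd, if_pos ((hcond x v).mp hcnd)]
            · rw [if_neg hcnd, if_neg (fun h => hcnd ((hcond x v).mpr h)), mul_zero]
        _ ≤ Pr p (fun ω => Y ω = y ∧ Z ω = z) * α := by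
            apply mul_le_mul_of_nonneg_left _ (Pr_nonneg p hp _)
            have hcore := core_pair q hq0 hq1 B (fun x => T x y z) (α * (B + 1))
              (by positivity)
            have heq : α * (B + 1) / (B + 1) = α := by
              field_simp
            rw [heq] at hcore
            exact hcore
    · -- zero conditional probability case
      have hzero : ∀ (x : 𝒳) (v : Fin B → 𝒳), Pr p (E x y z v) = 0 := by
        intro x v
        have hle : Pr p (E x y z v) ≤ Pr p (fun ω => Z ω = z) :=
          Pr_mono p hp (fun ω h => h.2.2.2)
        have hge : 0 ≤ Pr p (E x y z v) := Pr_nonneg p hp _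
        have hz' : Pr p (fun ω => Z ω = z) ≤ 0 := le_of_not_gt hz
        linarith
      have : (∑ x : 𝒳, ∑ v : Fin B → 𝒳, (if g x v y z ≤ α then Pr p (E x y z v) else 0))
          = 0 := by
        apply Finset.sum_eq_zero; intro x _
        apply Finset.sum_eq_zero; intro v _
        rw [hzero x v, ite_self]
      rw [this]
      exact mul_nonneg (Pr_nonneg p hp _) hα0
  -- Step 3: the marginal probabilities of (Y, Z) sum to 1
  have step3 : ∑ y : 𝒴, ∑ z : 𝒵, Pr p (fun ω => Y ω = y ∧ Z ω = z) = 1 := by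
    have collapse2 : ∀ ω : Ω,
        (∑ y : 𝒴, ∑ z : 𝒵, (if Y ω = y ∧ Z ω = z then p ω else 0)) = p ω := by
      intro ω
      rw [Finset.sum_eq_single (Y ω)]
      · rw [Finset.sum_eq_single (Z ω)]
        · exact if_pos ⟨rfl, rfl⟩
        · intro z _ hzz; exact if_neg (fun h => hzz h.2.symm)
        · intro hmem; exact absurd (Finset.mem_univ _) hmem
      · intro y _ hy
        apply Finset.sum_eq_zero; intro z _
        exact if_neg (fun h => hy h.1.symm)
      · intro hmem; exact absurd (Finset.mem_univ _) hmem
    calc ∑ y : 𝒴, ∑ z : 𝒵, Pr p (fun ω => Y ω = y ∧ Z ω = z)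
        = ∑ y : 𝒴, ∑ z : 𝒵, ∑ ω, (if Y ω = y ∧ Z ω = z then p ω else 0) :=
          Finset.sum_congr rfl fun y _ => Finset.sum_congr rfl fun z _ => Pr_eq_sum p _
      _ = ∑ y : 𝒴, ∑ ω, ∑ z : 𝒵, (if Y ω = y ∧ Z ω = z then p ω else 0) :=
          Finset.sum_congr rfl fun y _ => Finset.sum_comm
      _ = ∑ ω, ∑ y : 𝒴, ∑ z : 𝒵, (if Y ω = y ∧ Z ω = z then p ω else 0) := Finset.sum_comm
      _ = ∑ ω, p ω := Finset.sum_congr rfl fun ω _ => collapse2 ω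
      _ = 1 := hp1
  -- conclude
  calc Pr p (fun ω => pval ω ≤ α)
      = ∑ y : 𝒴, ∑ z : 𝒵, ∑ x : 𝒳, ∑ v : Fin B → 𝒳,
          (if g x v y z ≤ α then Pr p (E x y z v) else 0) := step1
    _ ≤ ∑ y : 𝒴, ∑ z : 𝒵, Pr p (fun ω => Y ω = y ∧ Z ω = z) * α := by
        apply Finset.sum_le_sum
        intro y _
        apply Finset.sum_le_sum
        intro z _
        exact step2 y z
    _ = (∑ y : 𝒴, ∑ z : 𝒵, Pr p (fun ω => Y ω = y ∧ Z ω = z)) * α := by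
        rw [Finset.sum_mul]
        apply Finset.sum_congr rfl
        intro y _
        rw [Finset.sum_mul]
    _ = α := by rw [step3, one_mul]
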